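/- For κ < 0 and c ∈ (0,√2), define p'_κ(c) = ((3c²κ−4κ−1)/(4√(−κ)))·atanh(√(−κ)·√((2−c²)/(1−2κ))) − (3(2−c²)/4)·√((1−2κ)/(2−c²)). Viewing p'_κ as a function of s = c² ∈ (0,2), its second derivative with respect to s equals ((1−2κ)²/(4(2−s)(1−κs)²))·√((1−2κ)/(2−s)) > 0; hence p'_κ is a strictly convex function of c² on (0,2). -/

import Mathlib

noncomputable def artanh (x : ℝ) : ℝ := (1/2) * Real.log ((1 + x) / (1 - x))

/-- `p'_κ` viewed as a function of `s = c²`. -/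
noncomputable def pderiv (κ s : ℝ) : ℝ :=
  ((3*s*κ - 4*κ - 1) / (4 * Real.sqrt (-κ))) *
      artanh (Real.sqrt (-κ) * Real.sqrt ((2 - s) / (1 - 2*κ)))
    - (3*(2 - s)/4) * Real.sqrt ((1 - 2*κ) / (2 - s))

/-! With `u = √((2 - s) / (1 - 2κ))` one has `1 - (√(-κ) u)² = (1 - κs) / (1 - 2κ)`, so
`artanh (√(-κ) u)` has derivative `-√(-κ) / (2u(1 - κs))`. In the first derivative of `p'_κ` the
artanh term therefore carries the constant coefficient `3κ / (4√(-κ))`, and the second derivative is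
an algebraic function of `s` and `u`; eliminating `s` through `2 - s = (1 - 2κ)u²` gives the closed
form, which is visibly positive, and strict convexity follows. -/

open Set Filter Topology

lemma hasDerivAt_artanh {x : ℝ} (hx : x ∈ Ioo (-1 : ℝ) 1) :
    HasDerivAt artanh (1 / (1 - x ^ 2)) x := by
  obtain ⟨hx₁, hx₂⟩ := hx
  have hsub : 1 - x ≠ 0 := by linarith
  have hadd : 1 + x ≠ 0 := by linarith
  have hquot : HasDerivAt (fun y => (1 + y) / (1 - y))
      ((1 * (1 - x) - (1 + x) * -1) / (1 - x) ^ 2) x :=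
    ((hasDerivAt_id' x).const_add 1).div ((hasDerivAt_id' x).const_sub 1) hsub
  have h := (hquot.log (div_pos (by linarith) (by linarith)).ne').const_mul (1 / 2)
  have hsq : 1 - x ^ 2 ≠ 0 := by nlinarith
  refine h.congr_deriv ?_
  field_simp
  ring

noncomputable def sqrtRatio (κ s : ℝ) : ℝ := √((2 - s) / (1 - 2 * κ))

section
variable {κ s : ℝ}

lemma sqrtRatio_pos (hκ : κ < 1 / 2) (hs : s < 2) : 0 < sqrtRatio κ s :=
  Real.sqrt_pos.mpr (div_pos (by linarith) (by linarith))

lemma sq_sqrtRatio (hκ : κ < 1 / 2) (hs : s ≤ 2) : sqrtRatio κ s ^ 2 = (2 - s) / (1 - 2 * κ) :=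
  Real.sq_sqrt (div_nonneg (by linarith) (by linarith))

lemma sqrt_div_eq_inv_sqrtRatio : √((1 - 2 * κ) / (2 - s)) = (sqrtRatio κ s)⁻¹ := by
  rw [sqrtRatio, ← Real.sqrt_inv, inv_div]

lemma one_sub_sq_mul_sqrtRatio (hκ : κ ≤ 0) (hs : s ≤ 2) :
    1 - (√(-κ) * sqrtRatio κ s) ^ 2 = (1 - κ * s) / (1 - 2 * κ) := by
  rw [mul_pow, Real.sq_sqrt (by linarith), sq_sqrtRatio (by linarith) hs]
  have hb : 1 - 2 * κ ≠ 0 := by linarith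
  rw [eq_div_iff hb, sub_mul, mul_assoc, div_mul_cancel₀ _ hb]
  ring

lemma sqrt_mul_sqrtRatio_mem_Ioo (hκ : κ < 0) (hs : s ∈ Ioo (0 : ℝ) 2) :
    √(-κ) * sqrtRatio κ s ∈ Ioo (-1 : ℝ) 1 := by
  have hnonneg : 0 ≤ √(-κ) * sqrtRatio κ s := by unfold sqrtRatio; positivity
  have hsq : (√(-κ) * sqrtRatio κ s) ^ 2 < 1 := by
    have h := one_sub_sq_mul_sqrtRatio hκ.le hs.2.le
    have : 0 < (1 - κ * s) / (1 - 2 * κ) := div_pos (by nlinarith [hs.1]) (by linarith)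
    linarith
  exact ⟨by linarith, (pow_lt_one_iff_of_nonneg hnonneg two_ne_zero).mp hsq⟩

lemma hasDerivAt_sqrtRatio (hκ : κ < 1 / 2) (hs : s < 2) :
    HasDerivAt (sqrtRatio κ) (-1 / (2 * (1 - 2 * κ) * sqrtRatio κ s)) s := by
  have h := (((hasDerivAt_id' s).const_sub 2).div_const (1 - 2 * κ)).sqrt
    (div_pos (by linarith) (by linarith)).ne'
  refine h.congr_deriv ?_
  rw [div_div, sqrtRatio]
  ring

lemma hasDerivAt_artanh_sqrtRatio (hκ : κ < 0) (hs : s ∈ Ioo (0 : ℝ) 2) :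
    HasDerivAt (fun t => artanh (√(-κ) * sqrtRatio κ t))
      (-√(-κ) / (2 * sqrtRatio κ s * (1 - κ * s))) s := by
  have h := (hasDerivAt_artanh (sqrt_mul_sqrtRatio_mem_Ioo hκ hs)).comp s
    ((hasDerivAt_sqrtRatio (by linarith) hs.2).const_mul (√(-κ)))
  refine h.congr_deriv ?_
  rw [one_sub_sq_mul_sqrtRatio hκ.le hs.2.le]
  have hb : 1 - κ * 2 ≠ 0 := by linarith
  have hM : 1 - κ * s ≠ 0 := by nlinarith [hs.1]
  have hu := (sqrtRatio_pos (κ := κ) (by linarith) hs.2).ne'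
  field_simp

lemma pderiv_eq (hκ : κ < 1 / 2) (hs : s < 2) :
    pderiv κ s = (3 * s * κ - 4 * κ - 1) / (4 * √(-κ)) * artanh (√(-κ) * sqrtRatio κ s)
      - 3 * (1 - 2 * κ) / 4 * sqrtRatio κ s := by
  rw [pderiv, sqrt_div_eq_inv_sqrtRatio]
  congr 1
  have hu := (sqrtRatio_pos hκ hs).ne'
  have hu2 := sq_sqrtRatio hκ hs.le
  have hb : 1 - 2 * κ ≠ 0 := by linarith
  field_simp
  rw [hu2]
  field_simp

noncomputable def derivPderiv (κ s : ℝ) : ℝ :=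
  3 * κ / (4 * √(-κ)) * artanh (√(-κ) * sqrtRatio κ s)
    + (2 + 2 * κ - 3 * κ * s) / (4 * sqrtRatio κ s * (1 - κ * s))

lemma hasDerivAt_pderiv (hκ : κ < 0) (hs : s ∈ Ioo (0 : ℝ) 2) :
    HasDerivAt (pderiv κ) (derivPderiv κ s) s := by
  have hκ' : κ < 1 / 2 := by linarith
  have hpderiv : (fun t => (3 * t * κ - 4 * κ - 1) / (4 * √(-κ)) * artanh (√(-κ) * sqrtRatio κ t)
      - 3 * (1 - 2 * κ) / 4 * sqrtRatio κ t) =ᶠ[𝓝 s] pderiv κ :=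
    eventually_of_mem (Iio_mem_nhds hs.2) fun t ht => (pderiv_eq hκ' ht).symm
  have hcoeff : HasDerivAt (fun t => (3 * t * κ - 4 * κ - 1) / (4 * √(-κ)))
      (3 * κ / (4 * √(-κ))) s := by
    simpa using ((((hasDerivAt_id' s).const_mul 3).mul_const κ).sub_const (4 * κ)).sub_const 1
      |>.div_const (4 * √(-κ))
  have h := (hcoeff.mul (hasDerivAt_artanh_sqrtRatio hκ hs)).sub
    ((hasDerivAt_sqrtRatio hκ' hs.2).const_mul (3 * (1 - 2 * κ) / 4))
  refine (h.congr_of_eventuallyEq hpderiv.symm).congr_deriv ?_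
  have ha : √(-κ) ≠ 0 := (Real.sqrt_pos.mpr (neg_pos.mpr hκ)).ne'
  have hu := (sqrtRatio_pos hκ' hs.2).ne'
  have hb : 1 - κ * 2 ≠ 0 := by linarith
  have hM : 1 - κ * s ≠ 0 := by nlinarith [hs.1]
  rw [derivPderiv]
  field_simp
  ring

lemma hasDerivAt_derivPderiv (hκ : κ < 0) (hs : s ∈ Ioo (0 : ℝ) 2) :
    HasDerivAt (derivPderiv κ)
      ((1 - 2 * κ) ^ 2 / (4 * (2 - s) * (1 - κ * s) ^ 2) * √((1 - 2 * κ) / (2 - s))) s := by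
  have hκ' : κ < 1 / 2 := by linarith
  have hnum : HasDerivAt (fun t => 2 + 2 * κ - 3 * κ * t) (-(3 * κ)) s := by
    simpa using ((hasDerivAt_id' s).const_mul (3 * κ)).const_sub (2 + 2 * κ)
  have hden : HasDerivAt (fun t => 4 * sqrtRatio κ t * (1 - κ * t))
      (4 * (-1 / (2 * (1 - 2 * κ) * sqrtRatio κ s)) * (1 - κ * s) + 4 * sqrtRatio κ s * -κ) s :=
    ((hasDerivAt_sqrtRatio hκ' hs.2).const_mul 4).mul
      (by simpa using ((hasDerivAt_id' s).const_mul κ).const_sub 1)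
  have hu := (sqrtRatio_pos hκ' hs.2).ne'
  have hM : 1 - κ * s ≠ 0 := by nlinarith [hs.1]
  have h := ((hasDerivAt_artanh_sqrtRatio hκ hs).const_mul (3 * κ / (4 * √(-κ)))).add
    (hnum.div hden (by positivity))
  refine h.congr_deriv ?_
  have ha : √(-κ) ≠ 0 := (Real.sqrt_pos.mpr (neg_pos.mpr hκ)).ne'
  have hb : 1 - κ * 2 ≠ 0 := by linarith
  have hu2 := sq_sqrtRatio hκ' hs.2.le
  rw [sqrt_div_eq_inv_sqrtRatio]
  generalize sqrtRatio κ s = u at *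
  obtain rfl : s = 2 - (1 - 2 * κ) * u ^ 2 := by
    rw [eq_div_iff (by linarith)] at hu2
    linarith
  rw [sub_sub_cancel]
  field_simp
  ring

lemma deriv_deriv_pderiv (hκ : κ < 0) (hs : s ∈ Ioo (0 : ℝ) 2) :
    deriv (deriv (pderiv κ)) s
      = (1 - 2 * κ) ^ 2 / (4 * (2 - s) * (1 - κ * s) ^ 2) * √((1 - 2 * κ) / (2 - s)) := by
  have h : deriv (pderiv κ) =ᶠ[𝓝 s] derivPderiv κ :=
    eventually_of_mem (isOpen_Ioo.mem_nhds hs) fun t ht => (hasDerivAt_pderiv hκ ht).deriv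
  rw [h.deriv_eq, (hasDerivAt_derivPderiv hκ hs).deriv]

end

/-- for `κ < 0`, the second derivative of `s ↦ p'_κ(√s)` on
`(0,2)` equals `((1-2κ)²/(4(2-s)(1-κs)²))·√((1-2κ)/(2-s)) > 0`; hence
`p'_κ` is a strictly convex function of `c²` on `(0,2)`. -/
theorem stmt_15 (κ : ℝ) (hκ : κ < 0) :
    (∀ s ∈ Set.Ioo (0:ℝ) 2,
      deriv (deriv (pderiv κ)) s =
          ((1 - 2*κ)^2 / (4*(2 - s)*(1 - κ*s)^2)) *
            Real.sqrt ((1 - 2*κ) / (2 - s)) ∧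
        0 < ((1 - 2*κ)^2 / (4*(2 - s)*(1 - κ*s)^2)) *
            Real.sqrt ((1 - 2*κ) / (2 - s))) ∧
    StrictConvexOn ℝ (Set.Ioo (0:ℝ) 2) (pderiv κ) := by
  have hpos : ∀ s ∈ Set.Ioo (0:ℝ) 2, 0 < ((1 - 2*κ)^2 / (4*(2 - s)*(1 - κ*s)^2)) *
      Real.sqrt ((1 - 2*κ) / (2 - s)) := by
    rintro s ⟨hs₀, hs₂⟩
    have hb : 0 < 1 - 2 * κ := by linarith
    have h2s : 0 < 2 - s := by linarith
    have hM : 0 < 1 - κ * s := by nlinarith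
    have hsqrt : 0 < √((1 - 2 * κ) / (2 - s)) := Real.sqrt_pos.mpr (div_pos hb h2s)
    positivity
  refine ⟨fun s hs => ⟨deriv_deriv_pderiv hκ hs, hpos s hs⟩,
    strictConvexOn_of_deriv2_pos' (convex_Ioo 0 2) ?_ ?_⟩
  · exact fun s hs => (hasDerivAt_pderiv hκ hs).continuousAt.continuousWithinAt
  · intro s hs
    rw [Function.iterate_succ_apply, Function.iterate_one, deriv_deriv_pderiv hκ hs]
    exact hpos s hs
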